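/- Let G be a connected bipartite graph with parts U and W, |U| = r, |W| = s, 3 ≤ r < s. Then λ(Ḡ) = λ(G) + 1 if and only if: (i) no two distinct vertices of W are twins; (ii) there exists w ∈ W with N(w) = U; and (iii) for every u ∈ U, the graph G − u has at least two pairs of distinct twin vertices in W. -/

import Mathlib

noncomputable section
open Classical

variable {V : Type*}

/-- `S` is a distinguishing set of `G`. -/
def IsDistinguishing (G : SimpleGraph V) (S : Set V) : Prop :=
  ∀ u ∉ S, ∀ v ∉ S, u ≠ v → G.neighborSet u ∩ S ≠ G.neighborSet v ∩ S

/-- `S` is a dominating set of `G`. -/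
def IsDominating (G : SimpleGraph V) (S : Set V) : Prop :=
  ∀ v ∉ S, ∃ u ∈ S, G.Adj v u

/-- `S` is a locating-dominating set of `G`. -/
def IsLD (G : SimpleGraph V) (S : Set V) : Prop :=
  IsDistinguishing G S ∧ IsDominating G S

/-- The location-domination number of `G`. -/
def ldNum (G : SimpleGraph V) : ℕ :=
  sInf {n | ∃ S : Set V, S.ncard = n ∧ IsLD G S}

/-- The graph `G^S` associated with a distinguishing set `S`:
vertices outside `S` are adjacent iff their neighborhoods in `S`
differ in exactly one vertex (the label of the edge). -/
def assocGraph (G : SimpleGraph V) (S : Set V) : SimpleGraph V where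
  Adj x y := x ∉ S ∧ y ∉ S ∧
    ∃ u, symmDiff (G.neighborSet x ∩ S) (G.neighborSet y ∩ S) = {u}
  symm := by
    constructor
    rintro x y ⟨hx, hy, u, hu⟩
    exact ⟨hy, hx, u, by rwa [symmDiff_comm]⟩
  loopless := by
    constructor
    rintro x ⟨-, -, u, hu⟩
    rw [symmDiff_self] at hu
    exact (Set.singleton_ne_empty u) (by simpa using hu.symm)

/-- The edge `e` of `G^S` has label `u`. -/
def edgeLabelIs (G : SimpleGraph V) (S : Set V) (u : V) (e : Sym2 V) : Prop :=
  Sym2.lift ⟨fun x y => symmDiff (G.neighborSet x ∩ S) (G.neighborSet y ∩ S) = {u},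
    fun x y => by simp only []; rw [symmDiff_comm]⟩ e

/-- The number of edges with label `u` in a list of edges (e.g. of a walk in `G^S`). -/
def labelCount (G : SimpleGraph V) (S : Set V) (u : V) (l : List (Sym2 V)) : ℕ :=
  l.countP fun e => decide (edgeLabelIs G S u e)

/-- No edge of `H` lies on two distinct cycles: any two cycles sharing an edge
have the same edge set.  (This says precisely that every connected component of
`H` is a cactus.) -/
def NoEdgeOnTwoCycles {α : Type*} (H : SimpleGraph α) : Prop :=
  ∀ (x y : α) (p : H.Walk x x) (q : H.Walk y y), p.IsCycle → q.IsCycle →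
    ∀ e ∈ p.edges, e ∈ q.edges → ∀ e', e' ∈ p.edges ↔ e' ∈ q.edges

/-- A cactus is a connected graph in which no edge lies on two distinct cycles. -/
def IsCactus {α : Type*} (H : SimpleGraph α) : Prop :=
  H.Connected ∧ NoEdgeOnTwoCycles H

/-- `x` and `y` are twins in `G`. -/
def Twins (G : SimpleGraph V) (x y : V) : Prop :=
  G.neighborSet x = G.neighborSet y ∨
    G.neighborSet x ∪ {x} = G.neighborSet y ∪ {y}

/-- `x` and `y` are twins in the vertex-deleted graph `G - u`. -/
def TwinsAvoid (G : SimpleGraph V) (u x y : V) : Prop :=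
  G.neighborSet x \ {u} = G.neighborSet y \ {u} ∨
    (G.neighborSet x ∪ {x}) \ {u} = (G.neighborSet y ∪ {y}) \ {u}

/-- `U, W` is a bipartition of `G` into two stable (independent) sets. -/
def BipartitionOf (G : SimpleGraph V) (U W : Set V) : Prop :=
  U ∪ W = Set.univ ∧ Disjoint U W ∧
    (∀ x ∈ U, ∀ y ∈ U, ¬ G.Adj x y) ∧ (∀ x ∈ W, ∀ y ∈ W, ¬ G.Adj x y)

/-!
Distinguishing sets of `G` and `Gᶜ` coincide, and a distinguishing set leaves at most one vertex
undominated, so `λ(Gᶜ) ≤ λ(G) + 1`, with equality iff no set of size `λ(G)` is locating-dominating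
in `Gᶜ`. In `Gᶜ` every set meeting both `U` and `W` is dominating.

If one of (i)–(iii) fails, a minimum locating-dominating set of `G` either meets both sides, or it
is a whole side, and then exchanging one of its vertices for a vertex of the other side (chosen
with the failing condition, or with `r < s`) gives a locating-dominating set of `Gᶜ`.

Conversely, under (i)–(iii) the side `U` is locating-dominating in `G`, and a distinguishing set
`S ⊉ U` contains more vertices of `W` than it misses of `U`. Over `𝔽₂`, the neighbourhood vectors
of a twin pair of `G - u` differ by the unit vector `e_u`. For `u ∉ S` both vertices have the same
trace on `S`, so `e_u` lies in the span of the vectors `N(x) - N(x')`, `x ∈ S ∩ W`, where `x'` is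
the vertex outside `S` with the trace of `x` (if any). The two twin pairs of a single `u` give a
linear relation among these vectors, so `|U \ S| < |S ∩ W|`.
-/

open scoped symmDiff
open Set Submodule Module SimpleGraph

theorem Set.symmDiff_eq_singleton_iff {α : Type*} {A B : Set α} {u : α} :
    A ∆ B = {u} ↔ A \ {u} = B \ {u} ∧ A ≠ B := by
  constructor
  · intro h
    refine ⟨?_, fun hAB => by simp [hAB] at h⟩
    ext z
    have := Set.ext_iff.1 h z
    simp only [mem_symmDiff, mem_singleton_iff, mem_sdiff] at this ⊢
    grind
  · rintro ⟨h, hAB⟩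
    refine (subset_singleton_iff_eq.1 fun z hz => by_contra fun hzu => ?_).resolve_left ?_
    · have := Set.ext_iff.1 h z
      simp only [mem_sdiff, mem_singleton_iff, mem_symmDiff] at this hz
      grind
    · rwa [← bot_eq_empty, symmDiff_eq_bot]

theorem Set.inter_eq_inter_of_symmDiff_eq_singleton {α : Type*} {A B S : Set α} {u : α}
    (h : A ∆ B = {u}) (hu : u ∉ S) : A ∩ S = B ∩ S := by
  ext z
  have := Set.ext_iff.1 h z
  simp only [mem_symmDiff, mem_singleton_iff, mem_inter_iff] at this ⊢
  grind

theorem ncard_lt_card_of_single_mem_span {K η ι : Type*} [DivisionRing K] [Finite η] {s : Set η}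
    {d : ι → η → K} {T : Finset ι} {x : ι} (hx : x ∈ T)
    (hdx : d x ∈ span K (d '' ↑(T.erase x))) (hs : ∀ i ∈ s, Pi.single i 1 ∈ span K (d '' ↑T)) :
    s.ncard < T.card := by
  have hspan : span K (d '' ↑T) ≤ span K (d '' ↑(T.erase x)) := by
    rw [span_le]
    rintro _ ⟨y, hy, rfl⟩
    by_cases hyx : y = x
    · exact hyx ▸ hdx
    · exact subset_span ⟨y, Finset.mem_erase.2 ⟨hyx, hy⟩, rfl⟩
  have hsub : Pi.spanSubset K s ≤ span K (d '' ↑(T.erase x)) := by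
    rw [Pi.spanSubset, span_le]
    rintro _ ⟨i, hi, rfl⟩
    exact hspan (by simpa using hs i hi)
  calc s.ncard = finrank K (Pi.spanSubset K s) := Pi.dim_spanSubset.symm
    _ ≤ finrank K (span K (d '' ↑(T.erase x))) := Submodule.finrank_mono hsub
    _ ≤ ((T.erase x).image d).card := by
      rw [← Finset.coe_image]; exact finrank_span_finset_le_card _
    _ ≤ (T.erase x).card := Finset.card_image_le
    _ < T.card := Finset.card_erase_lt_of_mem hx

section LocatingDominating

variable {H : SimpleGraph V} {S T : Set V} {v : V}

theorem isDistinguishing_iff_injOn :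
    IsDistinguishing H S ↔ InjOn (fun v => H.neighborSet v ∩ S) Sᶜ :=
  ⟨fun h _ hx _ hy hxy => by_contra fun hne => h _ hx _ hy hne hxy,
    fun h _ hx _ hy hne heq => hne (h hx hy heq)⟩

theorem IsDistinguishing.mono (h : IsDistinguishing H S) (hST : S ⊆ T) : IsDistinguishing H T := by
  intro x hx y hy hne heq
  refine h x (fun hxS => hx (hST hxS)) y (fun hyS => hy (hST hyS)) hne ?_
  rw [← inter_eq_right.2 hST, ← inter_assoc, heq, inter_assoc]

theorem IsDistinguishing.isLD_insert (h : IsDistinguishing H S) (hv : v ∉ S)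
    (hvS : ∀ u ∈ S, ¬ H.Adj v u) : IsLD H (insert v S) := by
  refine ⟨h.mono (subset_insert v S), fun x hx => ?_⟩
  rw [mem_insert_iff, not_or] at hx
  by_contra! hxS
  refine h x hx.2 v hv hx.1 ?_
  have hxe : H.neighborSet x ∩ S = ∅ :=
    eq_empty_of_forall_notMem fun u hu => hxS u (mem_insert_of_mem v hu.2) hu.1
  have hve : H.neighborSet v ∩ S = ∅ := eq_empty_of_forall_notMem fun u hu => hvS u hu.2 hu.1
  rw [hxe, hve]

theorem isDistinguishing_compl_iff : IsDistinguishing Hᶜ S ↔ IsDistinguishing H S := by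
  have key : ∀ x ∉ S, ∀ y ∉ S,
      Hᶜ.neighborSet x ∩ S = Hᶜ.neighborSet y ∩ S ↔ H.neighborSet x ∩ S = H.neighborSet y ∩ S := by
    intro x hx y hy
    simp only [Set.ext_iff, mem_inter_iff, mem_neighborSet, compl_adj]
    refine forall_congr' fun z => ?_
    by_cases hz : z ∈ S
    · have hxz : x ≠ z := (ne_of_mem_of_not_mem hz hx).symm
      have hyz : y ≠ z := (ne_of_mem_of_not_mem hz hy).symm
      simp [hz, hxz, hyz, not_iff_not]
    · simp [hz]
  exact forall₄_congr fun x hx y hy => imp_congr_right fun _ => not_congr (key x hx y hy)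

theorem exists_isLD_ncard_eq_ldNum (H : SimpleGraph V) : ∃ S, IsLD H S ∧ S.ncard = ldNum H := by
  obtain ⟨S, hS, hLD⟩ := Nat.sInf_mem (s := {n | ∃ S : Set V, S.ncard = n ∧ IsLD H S})
    ⟨_, univ, rfl, fun _ h => absurd (mem_univ _) h, fun _ h => absurd (mem_univ _) h⟩
  exact ⟨S, hLD, hS⟩

theorem ldNum_le_ncard (h : IsLD H S) : ldNum H ≤ S.ncard :=
  Nat.sInf_le ⟨S, rfl, h⟩

variable [Finite V]

theorem ldNum_compl_le_succ (G : SimpleGraph V) : ldNum Gᶜ ≤ ldNum G + 1 := by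
  obtain ⟨S, ⟨hSd, -⟩, hS⟩ := exists_isLD_ncard_eq_ldNum G
  have hSdc : IsDistinguishing Gᶜ S := isDistinguishing_compl_iff.2 hSd
  by_cases hdom : IsDominating Gᶜ S
  · exact (ldNum_le_ncard ⟨hSdc, hdom⟩).trans (hS ▸ Nat.le_succ _)
  · simp only [IsDominating, not_forall, not_exists, not_and] at hdom
    obtain ⟨v, hv, hvS⟩ := hdom
    calc ldNum Gᶜ ≤ (insert v S).ncard := ldNum_le_ncard (hSdc.isLD_insert hv hvS)
      _ = ldNum G + 1 := by rw [ncard_insert_of_notMem hv, hS]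

theorem ldNum_compl_eq_succ_iff_forall (G : SimpleGraph V) :
    ldNum Gᶜ = ldNum G + 1 ↔ ∀ S, IsLD Gᶜ S → ldNum G < S.ncard := by
  have hle := ldNum_compl_le_succ G
  refine ⟨fun h S hS => (ldNum_le_ncard hS).trans_lt' (by omega), fun h => ?_⟩
  obtain ⟨S, hS, hcard⟩ := exists_isLD_ncard_eq_ldNum Gᶜ
  have := h S hS
  omega

end LocatingDominating

section Twins

variable {G : SimpleGraph V} {x y u : V}

theorem twins_iff_of_not_adj (hxy : x ≠ y) (hadj : ¬ G.Adj x y) :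
    Twins G x y ↔ G.neighborSet x = G.neighborSet y := by
  refine ⟨fun h => h.resolve_right fun hc => ?_, Or.inl⟩
  have hx : x ∈ G.neighborSet y ∪ {y} := hc ▸ mem_union_right _ rfl
  exact hx.elim (fun h => hadj h.symm) hxy

theorem twinsAvoid_iff_of_not_adj (hxy : x ≠ y) (hxu : x ≠ u) (hadj : ¬ G.Adj x y) :
    TwinsAvoid G u x y ↔ G.neighborSet x \ {u} = G.neighborSet y \ {u} := by
  refine ⟨fun h => h.resolve_right fun hc => ?_, Or.inl⟩
  have hx : x ∈ (G.neighborSet y ∪ {y}) \ {u} := hc ▸ ⟨mem_union_right _ rfl, hxu⟩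
  exact hx.1.elim (fun h => hadj h.symm) hxy

theorem adjMatrix_sub_adjMatrix_eq_single (h : G.neighborSet x ∆ G.neighborSet y = {u}) :
    G.adjMatrix (ZMod 2) x - G.adjMatrix (ZMod 2) y = Pi.single u 1 := by
  ext z
  have hz := Set.ext_iff.1 h z
  simp only [mem_symmDiff, mem_neighborSet, mem_singleton_iff] at hz
  by_cases hzu : z = u
  · subst hzu
    by_cases hx : G.Adj x z <;> by_cases hy : G.Adj y z <;> simp_all
  · by_cases hx : G.Adj x z <;> by_cases hy : G.Adj y z <;> simp_all

end Twins

namespace BipartitionOf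

variable {G : SimpleGraph V} {U W S : Set V}

theorem symm (h : BipartitionOf G U W) : BipartitionOf G W U :=
  ⟨by rw [union_comm, h.1], h.2.1.symm, h.2.2.2, h.2.2.1⟩

theorem compl_left (h : BipartitionOf G U W) : Uᶜ = W :=
  IsCompl.compl_eq ⟨h.2.1, codisjoint_iff.2 h.1⟩

theorem notMem_left_iff (h : BipartitionOf G U W) {v : V} : v ∉ U ↔ v ∈ W := by
  rw [← h.compl_left]; rfl

theorem neighborSet_subset (h : BipartitionOf G U W) {w : V} (hw : w ∈ W) :
    G.neighborSet w ⊆ U :=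
  fun z hz => h.symm.notMem_left_iff.1 fun hzW => h.2.2.2 w hw z hzW hz

theorem eq_of_isDominating (h : BipartitionOf G U W) (hS : IsDominating G S) (hSU : S ⊆ U) :
    S = U := by
  refine hSU.antisymm fun u hu => by_contra fun huS => ?_
  obtain ⟨x, hx, hadj⟩ := hS u huS
  exact h.2.2.1 u hu x (hSU hx) hadj

theorem isDominating_compl (h : BipartitionOf G U W) (hU : (S ∩ U).Nonempty)
    (hW : (S ∩ W).Nonempty) : IsDominating Gᶜ S := by
  obtain ⟨u, huS, hu⟩ := hU
  obtain ⟨w, hwS, hw⟩ := hW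
  intro v hv
  by_cases hvU : v ∈ U
  · exact ⟨u, huS, (compl_adj G v u).2 ⟨(ne_of_mem_of_not_mem huS hv).symm, h.2.2.1 v hvU u hu⟩⟩
  · exact ⟨w, hwS, (compl_adj G v w).2
      ⟨(ne_of_mem_of_not_mem hwS hv).symm, h.2.2.2 v (h.notMem_left_iff.1 hvU) w hw⟩⟩

theorem isDistinguishing_left_iff (h : BipartitionOf G U W) :
    IsDistinguishing G U ↔ InjOn G.neighborSet W := by
  rw [isDistinguishing_iff_injOn, h.compl_left]
  exact ⟨fun hi => hi.congr fun w hw => inter_eq_left.2 (h.neighborSet_subset hw),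
    fun hi => hi.congr fun w hw => (inter_eq_left.2 (h.neighborSet_subset hw)).symm⟩

theorem isLD_left [Nontrivial V] (h : BipartitionOf G U W) (hconn : G.Connected)
    (hinj : InjOn G.neighborSet W) : IsLD G U := by
  refine ⟨h.isDistinguishing_left_iff.2 hinj, fun v hv => ?_⟩
  obtain ⟨x, hx⟩ := hconn.preconnected.exists_adj_of_nontrivial v
  exact ⟨x, h.neighborSet_subset (h.notMem_left_iff.1 hv) hx, hx⟩

theorem injOn_neighborSet_iff (h : BipartitionOf G U W) :
    InjOn G.neighborSet W ↔ ∀ w₁ ∈ W, ∀ w₂ ∈ W, w₁ ≠ w₂ → ¬ Twins G w₁ w₂ :=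
  ⟨fun hi _ hx _ hy hne ht =>
      hne (hi hx hy ((twins_iff_of_not_adj hne (h.2.2.2 _ hx _ hy)).1 ht)),
    fun hi _ hx _ hy heq => by_contra fun hne => hi _ hx _ hy hne (Or.inl heq)⟩

theorem ne_and_twinsAvoid_iff (h : BipartitionOf G U W) (hinj : InjOn G.neighborSet W)
    {x y u : V} (hx : x ∈ W) (hy : y ∈ W) (hu : u ∈ U) :
    x ≠ y ∧ TwinsAvoid G u x y ↔ G.neighborSet x ∆ G.neighborSet y = {u} := by
  rw [symmDiff_eq_singleton_iff, hinj.ne_iff hx hy]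
  have hxu : x ≠ u := ne_of_mem_of_not_mem hx (h.symm.notMem_left_iff.2 hu)
  exact ⟨fun ⟨hne, ht⟩ => ⟨(twinsAvoid_iff_of_not_adj hne hxu (h.2.2.2 x hx y hy)).1 ht, hne⟩,
    fun ⟨hd, hne⟩ => ⟨hne, Or.inl hd⟩⟩

end BipartitionOf

/-- The pairs of vertices of `W` that are twins in `G - u` but not in `G`. -/
def deletionTwinPairs (G : SimpleGraph V) (W : Set V) (u : V) : Set (Sym2 V) :=
  {e | ∃ p ∈ W, ∃ q ∈ W, e = s(p, q) ∧ G.neighborSet p ∆ G.neighborSet q = {u}}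

section DeletionTwinPairs

variable {G : SimpleGraph V} {W S : Set V} {u : V}

theorem mk_mem_deletionTwinPairs_iff {p q : V} :
    s(p, q) ∈ deletionTwinPairs G W u ↔
      p ∈ W ∧ q ∈ W ∧ G.neighborSet p ∆ G.neighborSet q = {u} := by
  refine ⟨fun ⟨p', hp', q', hq', he, h⟩ => ?_, fun ⟨hp, hq, h⟩ => ⟨p, hp, q, hq, rfl, h⟩⟩
  rcases Sym2.eq_iff.1 he with ⟨rfl, rfl⟩ | ⟨rfl, rfl⟩
  · exact ⟨hp', hq', h⟩
  · exact ⟨hq', hp', symmDiff_comm (G.neighborSet p) _ ▸ h⟩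

theorem eq_of_mem_deletionTwinPairs (hinj : InjOn G.neighborSet W) {e e' : Sym2 V} {v : V}
    (he : e ∈ deletionTwinPairs G W u) (he' : e' ∈ deletionTwinPairs G W u)
    (hv : v ∈ e) (hv' : v ∈ e') : e = e' := by
  obtain ⟨q, rfl⟩ := Sym2.mem_iff_exists.1 hv
  obtain ⟨q', rfl⟩ := Sym2.mem_iff_exists.1 hv'
  obtain ⟨-, hq, h⟩ := mk_mem_deletionTwinPairs_iff.1 he
  obtain ⟨-, hq', h'⟩ := mk_mem_deletionTwinPairs_iff.1 he'
  rw [hinj hq hq' (by rw [← symmDiff_symmDiff_cancel_left (G.neighborSet v) (G.neighborSet q),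
    h, ← h', symmDiff_symmDiff_cancel_left])]

theorem IsDistinguishing.exists_mem_of_deletionTwinPairs_nontrivial (hS : IsDistinguishing G S)
    (hinj : InjOn G.neighborSet W) (hu : u ∉ S) (h : (deletionTwinPairs G W u).Nontrivial) :
    ∃ x ∈ S ∩ W, ∃ y ∈ W, ∃ p ∈ W, ∃ q ∈ W, y ≠ x ∧ p ≠ x ∧ q ≠ x ∧
      G.neighborSet x ∆ G.neighborSet y = {u} ∧ G.neighborSet p ∆ G.neighborSet q = {u} := by
  obtain ⟨_, ⟨x, hx, y, hy, rfl, hxy⟩, _, ⟨p, hp, q, hq, rfl, hpq⟩, hne⟩ := h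
  have hmem : s(x, y) ∈ deletionTwinPairs G W u := ⟨x, hx, y, hy, rfl, hxy⟩
  have hmem' : s(p, q) ∈ deletionTwinPairs G W u := ⟨p, hp, q, hq, rfl, hpq⟩
  have hdisj : ∀ z ∈ s(x, y), z ≠ p ∧ z ≠ q := fun z hz =>
    ⟨fun hzp => hne (eq_of_mem_deletionTwinPairs hinj hmem hmem' hz (hzp ▸ Sym2.mem_mk_left p q)),
      fun hzq => hne (eq_of_mem_deletionTwinPairs hinj hmem hmem' hz (hzq ▸ Sym2.mem_mk_right p q))⟩
  have hyx : y ≠ x := fun hyx => by simp [hyx] at hxy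
  have htrace := inter_eq_inter_of_symmDiff_eq_singleton hxy hu
  by_cases hxS : x ∈ S
  · exact ⟨x, ⟨hxS, hx⟩, y, hy, p, hp, q, hq, hyx, (hdisj x (Sym2.mem_mk_left x y)).1.symm,
      (hdisj x (Sym2.mem_mk_left x y)).2.symm, hxy, hpq⟩
  · have hyS : y ∈ S := by_contra fun hyS => hS x hxS y hyS hyx.symm htrace
    exact ⟨y, ⟨hyS, hy⟩, x, hx, p, hp, q, hq, hyx.symm, (hdisj y (Sym2.mem_mk_right x y)).1.symm,
      (hdisj y (Sym2.mem_mk_right x y)).2.symm, symmDiff_comm (G.neighborSet x) _ ▸ hxy, hpq⟩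

end DeletionTwinPairs

section Counting

variable [Fintype V] {G : SimpleGraph V} {U W S : Set V}

theorem ncard_setOf_symmDiff_eq_singleton_lt (G : SimpleGraph V) (hU : U.Nonempty) :
    {w | ∃ u ∈ U, ∃ u' ∈ U, G.neighborSet u ∆ G.neighborSet u' = {w}}.ncard < U.ncard := by
  obtain ⟨u₀, hu₀⟩ := hU
  let d : V → V → ZMod 2 := fun u => G.adjMatrix (ZMod 2) u - G.adjMatrix (ZMod 2) u₀
  have hmem : ∀ u ∈ U, d u ∈ span (ZMod 2) (d '' ↑U.toFinset) :=
    fun u hu => subset_span ⟨u, by simpa using hu, rfl⟩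
  rw [ncard_eq_toFinset_card' U]
  refine ncard_lt_card_of_single_mem_span (d := d) (T := U.toFinset) (x := u₀) (by simpa using hu₀)
    (by simp [d]) ?_
  rintro w ⟨u, hu, u', hu', h⟩
  rw [← adjMatrix_sub_adjMatrix_eq_single h,
    ← sub_sub_sub_cancel_right _ _ (G.adjMatrix (ZMod 2) u₀)]
  exact sub_mem (hmem u hu) (hmem u' hu')

theorem IsDistinguishing.ncard_lt_ncard_inter {L : Set V} (hS : IsDistinguishing G S)
    (hinj : InjOn G.neighborSet W) (hLS : Disjoint L S) (hL : L.Nonempty)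
    (hpairs : ∀ u ∈ L, (deletionTwinPairs G W u).Nontrivial) : L.ncard < (S ∩ W).ncard := by
  obtain ⟨u, hu⟩ := hL
  have : Nonempty V := ⟨u⟩
  let c : V → Set V := fun v => G.neighborSet v ∩ S
  -- `d v` compares `v` with the vertex outside `S` that has the same trace on `S`, if there is one
  let d : V → V → ZMod 2 := fun v =>
    G.adjMatrix (ZMod 2) v - G.adjMatrix (ZMod 2) (Function.invFunOn c Sᶜ (c v))
  have hc : InjOn c Sᶜ := isDistinguishing_iff_injOn.1 hS
  have hd : ∀ v ∉ S, d v = 0 := fun v hv => by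
    simp only [d, hc.leftInvOn_invFunOn hv, sub_self]
  have hsingle : ∀ {w p q}, w ∉ S → G.neighborSet p ∆ G.neighborSet q = {w} →
      d p - d q = Pi.single w 1 := by
    intro w p q hw h
    simp only [d, c, inter_eq_inter_of_symmDiff_eq_singleton h hw, sub_sub_sub_cancel_right]
    exact adjMatrix_sub_adjMatrix_eq_single h
  have hmem : ∀ T : Finset V, ∀ v ∈ W, (v ∈ S → v ∈ T) → d v ∈ span (ZMod 2) (d '' ↑T) := by
    intro T v hv hT
    by_cases hvS : v ∈ S
    · exact subset_span ⟨v, hT hvS, rfl⟩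
    · rw [hd v hvS]; exact zero_mem _
  obtain ⟨x, ⟨hxS, hxW⟩, y, hy, p, hp, q, hq, hyx, hpx, hqx, hxy, hpq⟩ :=
    hS.exists_mem_of_deletionTwinPairs_nontrivial hinj (disjoint_left.1 hLS hu) (hpairs u hu)
  rw [ncard_eq_toFinset_card' (S ∩ W)]
  refine ncard_lt_card_of_single_mem_span (d := d) (T := (S ∩ W).toFinset) (x := x)
    (by simp [hxS, hxW]) ?_ ?_
  · have hrel : d x - d y = d p - d q :=
      (hsingle (disjoint_left.1 hLS hu) hxy).trans (hsingle (disjoint_left.1 hLS hu) hpq).symm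
    have hT : ∀ v ∈ W, v ≠ x → d v ∈ span (ZMod 2) (d '' ↑((S ∩ W).toFinset.erase x)) :=
      fun v hv hvx => hmem _ v hv fun hvS => by simp [hvx, hvS, hv]
    rw [← add_sub_cancel (d y) (d x), hrel]
    exact add_mem (hT y hy hyx) (sub_mem (hT p hp hpx) (hT q hq hqx))
  · intro w hw
    obtain ⟨_, p, hp, q, hq, rfl, hpq⟩ := (hpairs w hw).nonempty
    rw [← hsingle (disjoint_left.1 hLS hw) hpq]
    exact sub_mem (hmem _ p hp fun h => by simp [h, hp]) (hmem _ q hq fun h => by simp [h, hq])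

end Counting

namespace BipartitionOf

variable {G : SimpleGraph V} {U W S : Set V}

theorem exists_twinsAvoid_iff_nontrivial (h : BipartitionOf G U W)
    (hinj : InjOn G.neighborSet W) {u : V} (hu : u ∈ U) :
    (∃ x₁ y₁ x₂ y₂ : V, x₁ ∈ W ∧ y₁ ∈ W ∧ x₂ ∈ W ∧ y₂ ∈ W ∧ x₁ ≠ y₁ ∧ x₂ ≠ y₂ ∧
      TwinsAvoid G u x₁ y₁ ∧ TwinsAvoid G u x₂ y₂ ∧ ({x₁, y₁} : Set V) ≠ {x₂, y₂}) ↔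
    (deletionTwinPairs G W u).Nontrivial := by
  constructor
  · rintro ⟨x₁, y₁, x₂, y₂, hx₁, hy₁, hx₂, hy₂, hne₁, hne₂, h₁, h₂, hne⟩
    exact ⟨s(x₁, y₁),
      ⟨x₁, hx₁, y₁, hy₁, rfl, (h.ne_and_twinsAvoid_iff hinj hx₁ hy₁ hu).1 ⟨hne₁, h₁⟩⟩,
      s(x₂, y₂), ⟨x₂, hx₂, y₂, hy₂, rfl, (h.ne_and_twinsAvoid_iff hinj hx₂ hy₂ hu).1 ⟨hne₂, h₂⟩⟩,
      by rwa [Ne, Sym2.eq_iff, ← pair_eq_pair_iff]⟩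
  · rintro ⟨_, ⟨x₁, hx₁, y₁, hy₁, rfl, h₁⟩, _, ⟨x₂, hx₂, y₂, hy₂, rfl, h₂⟩, hne⟩
    obtain ⟨hne₁, h₁⟩ := (h.ne_and_twinsAvoid_iff hinj hx₁ hy₁ hu).2 h₁
    obtain ⟨hne₂, h₂⟩ := (h.ne_and_twinsAvoid_iff hinj hx₂ hy₂ hu).2 h₂
    exact ⟨x₁, y₁, x₂, y₂, hx₁, hy₁, hx₂, hy₂, hne₁, hne₂, h₁, h₂,
      by rwa [Ne, pair_eq_pair_iff, ← Sym2.eq_iff]⟩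

/-- The witness is `insert b (U \ {a})`. -/
theorem exists_isLD_compl_of_exchange [Finite V] (h : BipartitionOf G U W) (hU : U.Nontrivial)
    {a b : V} (ha : a ∈ U) (hb : b ∈ W) (hab : G.Adj a b)
    (hW : ∀ y ∈ W, ∀ y' ∈ W, y ≠ b → y' ≠ b →
      G.neighborSet y \ {a} = G.neighborSet y' \ {a} → y = y') :
    ∃ S, IsLD Gᶜ S ∧ S.ncard = U.ncard := by
  obtain ⟨c, hc, hca⟩ := hU.exists_ne a
  have hbU : b ∉ U := h.notMem_left_iff.2 hb
  set S := insert b (U \ {a})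
  have hout : ∀ v ∉ S, v = a ∨ v ∈ W ∧ v ≠ b := fun v hv => by
    simp only [S, mem_insert_iff, mem_sdiff, mem_singleton_iff, not_or, not_and_not_right] at hv
    exact (_root_.em (v ∈ U)).imp hv.2 fun hvU => ⟨h.notMem_left_iff.1 hvU, hv.1⟩
  have htrace : ∀ y ∈ W, G.neighborSet y ∩ S = G.neighborSet y \ {a} := fun y hy => by
    ext z
    have hzU : z ∈ G.neighborSet y → z ∈ U := fun hz => h.neighborSet_subset hy hz
    simp only [S, mem_inter_iff, mem_insert_iff, mem_sdiff]
    constructor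
    · rintro ⟨hz, rfl | ⟨-, hza⟩⟩
      · exact absurd (hzU hz) hbU
      · exact ⟨hz, hza⟩
    · rintro ⟨hz, hza⟩
      exact ⟨hz, Or.inr ⟨hzU hz, hza⟩⟩
  have hsep : ∀ y ∈ W, G.neighborSet a ∩ S ≠ G.neighborSet y ∩ S := fun y hy heq =>
    hbU (h.neighborSet_subset hy (heq ▸ ⟨hab, mem_insert b _⟩ : b ∈ G.neighborSet y ∩ S).1)
  refine ⟨S, ⟨isDistinguishing_compl_iff.2 fun x hx y hy hxy heq => ?_,
    h.isDominating_compl ⟨c, mem_insert_of_mem _ ⟨hc, hca⟩, hc⟩ ⟨b, mem_insert _ _, hb⟩⟩, ?_⟩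
  · rcases hout x hx with rfl | ⟨hxW, hxb⟩ <;> rcases hout y hy with rfl | ⟨hyW, hyb⟩
    · exact hxy rfl
    · exact hsep y hyW heq
    · exact hsep x hxW heq.symm
    · exact hxy (hW x hxW y hyW hxb hyb (by rwa [htrace x hxW, htrace y hyW] at heq))
  · rw [ncard_insert_of_notMem fun hb' => hbU hb'.1, ncard_sdiff_singleton_add_one ha]

theorem exists_adj_forall_mem_deletionTwinPairs [Nontrivial V] (h : BipartitionOf G U W)
    (hconn : G.Connected) {u : V} (hu : u ∈ U) (hP : (deletionTwinPairs G W u).Subsingleton) :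
    ∃ x ∈ W, G.Adj u x ∧ ∀ e ∈ deletionTwinPairs G W u, x ∈ e := by
  rcases (deletionTwinPairs G W u).eq_empty_or_nonempty with hempty | ⟨e, he⟩
  · obtain ⟨x, hx⟩ := hconn.preconnected.exists_adj_of_nontrivial u
    exact ⟨x, h.symm.neighborSet_subset hu hx, hx, by simp [hempty]⟩
  · obtain ⟨p, hp, q, hq, rfl, hpq⟩ := id he
    have hu' : u ∈ G.neighborSet p ∆ G.neighborSet q := hpq ▸ rfl
    rcases hu' with ⟨hup, -⟩ | ⟨huq, -⟩
    · exact ⟨p, hp, hup.symm, fun e' he' => hP he he' ▸ Sym2.mem_mk_left p q⟩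
    · exact ⟨q, hq, huq.symm, fun e' he' => hP he he' ▸ Sym2.mem_mk_right p q⟩

theorem exists_isLD_compl_of_isLD_left [Finite V] [Nontrivial V] (h : BipartitionOf G U W)
    (hconn : G.Connected) (hU : U.Nontrivial) (hLD : IsLD G U)
    (hcond : ¬ ((∃ w ∈ W, G.neighborSet w = U) ∧ ∀ u ∈ U, (deletionTwinPairs G W u).Nontrivial)) :
    ∃ S, IsLD Gᶜ S ∧ S.ncard = U.ncard := by
  have hinj : InjOn G.neighborSet W := h.isDistinguishing_left_iff.1 hLD.1
  rcases not_and_or.1 hcond with hfull | hpairs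
  · refine ⟨U, ⟨isDistinguishing_compl_iff.2 hLD.1, fun w hw => ?_⟩, rfl⟩
    have hwW := h.notMem_left_iff.1 hw
    obtain ⟨x, hxU, hxw⟩ := exists_of_ssubset
      ((h.neighborSet_subset hwW).ssubset_of_ne fun hNw => hfull ⟨w, hwW, hNw⟩)
    exact ⟨x, hxU, (compl_adj G w x).2 ⟨(ne_of_mem_of_not_mem hxU hw).symm, hxw⟩⟩
  · obtain ⟨u, hu, hP⟩ := not_forall₂.1 hpairs
    obtain ⟨x, hx, hux, hxP⟩ :=
      h.exists_adj_forall_mem_deletionTwinPairs hconn hu (not_nontrivial_iff.1 hP)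
    refine h.exists_isLD_compl_of_exchange hU hu hx hux fun y hy y' hy' hyx hy'x heq => ?_
    by_contra hne
    have hmem : s(y, y') ∈ deletionTwinPairs G W u :=
      ⟨y, hy, y', hy', rfl, symmDiff_eq_singleton_iff.2 ⟨heq, hinj.ne hy hy' hne⟩⟩
    rcases Sym2.mem_iff.1 (hxP _ hmem) with rfl | rfl
    exacts [hyx rfl, hy'x rfl]

theorem exists_isLD_compl_of_isLD_right [Fintype V] (h : BipartitionOf G U W)
    (hU : U.Nonempty) (hUW : U.ncard < W.ncard) (hLD : IsLD G W) :
    ∃ S, IsLD Gᶜ S ∧ S.ncard = W.ncard := by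
  by_cases hdom : IsDominating Gᶜ W
  · exact ⟨W, ⟨isDistinguishing_compl_iff.2 hLD.1, hdom⟩, rfl⟩
  simp only [IsDominating, not_forall, not_exists, not_and] at hdom
  obtain ⟨v, hvW, hv⟩ := hdom
  have hinj : InjOn G.neighborSet U := h.symm.isDistinguishing_left_iff.1 hLD.1
  set D := {w | ∃ u ∈ U, ∃ u' ∈ U, G.neighborSet u ∆ G.neighborSet u' = {w}}
  obtain ⟨w, hwW, hwD⟩ : ∃ w ∈ W, w ∉ D := not_subset.1 fun hWD =>
    ((ncard_le_ncard hWD).trans_lt ((ncard_setOf_symmDiff_eq_singleton_lt G hU).trans hUW)).false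
  have hvw : G.Adj w v := by
    have := hv w hwW
    rw [compl_adj, not_and_not_right] at this
    exact (this (ne_of_mem_of_not_mem hwW hvW).symm).symm
  refine h.symm.exists_isLD_compl_of_exchange (one_lt_ncard_iff_nontrivial.1 ?_) hwW
    (h.symm.notMem_left_iff.1 hvW) hvw fun y hy y' hy' _ _ heq => by_contra fun hne => hwD
      ⟨y, hy, y', hy', symmDiff_eq_singleton_iff.2 ⟨heq, hinj.ne hy hy' hne⟩⟩
  have := hU.ncard_pos
  omega

variable [Fintype V] [Nontrivial V]

theorem ldNum_lt_ncard_of_isLD_compl (h : BipartitionOf G U W) (hconn : G.Connected)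
    (hinj : InjOn G.neighborSet W) (hfull : ∃ w ∈ W, G.neighborSet w = U)
    (hpairs : ∀ u ∈ U, (deletionTwinPairs G W u).Nontrivial) (hS : IsLD Gᶜ S) :
    ldNum G < S.ncard := by
  refine (ldNum_le_ncard (h.isLD_left hconn hinj)).trans_lt ?_
  by_cases hUS : U ⊆ S
  · refine ncard_lt_ncard (hUS.ssubset_of_ne ?_)
    rintro rfl
    obtain ⟨w, hw, hNw⟩ := hfull
    obtain ⟨u, hu, hwu⟩ := hS.2 w (h.notMem_left_iff.2 hw)
    exact ((compl_adj G w u).1 hwu).2 (show u ∈ G.neighborSet w from hNw ▸ hu)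
  · have hkey := (isDistinguishing_compl_iff.1 hS.1).ncard_lt_ncard_inter hinj disjoint_sdiff_left
      (sdiff_nonempty.2 hUS) fun u hu => hpairs u hu.1
    have hSW : (S ∩ W).ncard ≤ (S \ U).ncard :=
      ncard_le_ncard fun v hv => ⟨hv.1, h.notMem_left_iff.2 hv.2⟩
    calc U.ncard = (U ∩ S).ncard + (U \ S).ncard := (ncard_inter_add_ncard_sdiff_eq_ncard U S).symm
      _ < (S ∩ U).ncard + (S \ U).ncard := by rw [inter_comm]; omega
      _ = S.ncard := ncard_inter_add_ncard_sdiff_eq_ncard S U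

theorem exists_isLD_compl_ncard_eq (h : BipartitionOf G U W) (hconn : G.Connected)
    (hU : U.Nontrivial) (hUW : U.ncard < W.ncard)
    (hcond : ¬ (InjOn G.neighborSet W ∧ (∃ w ∈ W, G.neighborSet w = U) ∧
      ∀ u ∈ U, (deletionTwinPairs G W u).Nontrivial)) :
    ∃ S, IsLD Gᶜ S ∧ S.ncard = ldNum G := by
  obtain ⟨S, hS, hcard⟩ := exists_isLD_ncard_eq_ldNum G
  rw [← hcard]
  by_cases hSW : (S ∩ W).Nonempty
  · by_cases hSU : (S ∩ U).Nonempty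
    · exact ⟨S, ⟨isDistinguishing_compl_iff.2 hS.1, h.isDominating_compl hSU hSW⟩, rfl⟩
    · obtain rfl := h.symm.eq_of_isDominating hS.2
        fun v hv => h.notMem_left_iff.1 fun hvU => hSU ⟨v, hv, hvU⟩
      exact h.exists_isLD_compl_of_isLD_right hU.nonempty hUW hS
  · obtain rfl := h.eq_of_isDominating hS.2
      fun v hv => h.symm.notMem_left_iff.1 fun hvW => hSW ⟨v, hv, hvW⟩
    exact h.exists_isLD_compl_of_isLD_left hconn hU hS
      fun hc => hcond ⟨h.isDistinguishing_left_iff.1 hS.1, hc⟩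

end BipartitionOf

theorem ldNum_compl_eq_succ_iff [Fintype V] (G : SimpleGraph V) (U W : Set V)
    (hbip : BipartitionOf G U W) (hconn : G.Connected) (r s : ℕ)
    (hU : U.ncard = r) (hW : W.ncard = s) (h3 : 3 ≤ r) (hrs : r < s) :
    ldNum Gᶜ = ldNum G + 1 ↔
      ((∀ w₁ ∈ W, ∀ w₂ ∈ W, w₁ ≠ w₂ → ¬ Twins G w₁ w₂) ∧
       (∃ w ∈ W, G.neighborSet w = U) ∧
       (∀ u ∈ U, ∃ x₁ y₁ x₂ y₂ : V,
          x₁ ∈ W ∧ y₁ ∈ W ∧ x₂ ∈ W ∧ y₂ ∈ W ∧ x₁ ≠ y₁ ∧ x₂ ≠ y₂ ∧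
          TwinsAvoid G u x₁ y₁ ∧ TwinsAvoid G u x₂ y₂ ∧
          ({x₁, y₁} : Set V) ≠ {x₂, y₂})) := by
  have hUnt : U.Nontrivial := one_lt_ncard_iff_nontrivial.1 (by omega)
  have : Nontrivial V := nontrivial_of_nontrivial hUnt
  rw [ldNum_compl_eq_succ_iff_forall, ← hbip.injOn_neighborSet_iff]
  constructor
  · intro hlt
    by_contra hc
    obtain ⟨S, hS, hcard⟩ := hbip.exists_isLD_compl_ncard_eq hconn hUnt (by omega)
      fun ⟨hinj, hfull, hpairs⟩ => hc ⟨hinj, hfull,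
        fun u hu => (hbip.exists_twinsAvoid_iff_nontrivial hinj hu).2 (hpairs u hu)⟩
    exact (hlt S hS).ne' hcard
  · rintro ⟨hinj, hfull, hpairs⟩ S hS
    exact hbip.ldNum_lt_ncard_of_isLD_compl hconn hinj hfull
      (fun u hu => (hbip.exists_twinsAvoid_iff_nontrivial hinj hu).1 (hpairs u hu)) hS

end
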